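/- The pseudospin expectation obeys the symmetry F(γ, β, θ) = F(β′, γ′, θ) for all γ, β ∈ ℝ^p and all θ ∈ ℝ, where γ′ = (γ_p, …, γ_1) and β′ = (β_p, …, β_1) are the reversed tuples; i.e., reversing the sequence and exchanging the roles of the γ- and β-angles leaves the expectation unchanged. -/

import Mathlib

open Matrix Complex Real

noncomputable section

def σx : Matrix (Fin 2) (Fin 2) ℂ := !![0, 1; 1, 0]

def σz : Matrix (Fin 2) (Fin 2) ℂ := !![1, 0; 0, -1]

/-- The Bloch axis `n(θ) = cos θ · σz + sin θ · σx`. -/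
def nvec (θ : ℝ) : Matrix (Fin 2) (Fin 2) ℂ :=
  (Real.cos θ : ℂ) • σz + (Real.sin θ : ℂ) • σx

/-- `U_B(β) = exp(−2iβ·σz)`. -/
def UB (β : ℝ) : Matrix (Fin 2) (Fin 2) ℂ :=
  NormedSpace.exp ((-2 * β * Complex.I) • σz)

/-- `U_C(γ,θ) = exp(−2iγ·n(θ))`. -/
def UC (γ θ : ℝ) : Matrix (Fin 2) (Fin 2) ℂ :=
  NormedSpace.exp ((-2 * γ * Complex.I) • nvec θ)

/-- The level-`p` QAOA circuit `U(γ,β,θ) = U_B(β_p)·U_C(γ_p,θ)·⋯·U_B(β_1)·U_C(γ_1,θ)`. -/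
def Uqaoa (p : ℕ) (γ β : Fin p → ℝ) (θ : ℝ) : Matrix (Fin 2) (Fin 2) ℂ :=
  ((List.ofFn fun i : Fin p => UB (β i) * UC (γ i) θ).reverse).prod

/-- The pseudospin expectation `F(γ,β,θ) = Re tr[n(θ)·U·σz·U†]`. -/
def Fps (p : ℕ) (γ β : Fin p → ℝ) (θ : ℝ) : ℝ :=
  (Matrix.trace (nvec θ * Uqaoa p γ β θ * σz * (Uqaoa p γ β θ)ᴴ)).re

end
noncomputable section

/-!
The reflection `S = n(θ/2)` satisfies `S² = 1`, `S σz S = n(θ)` and `S n(θ) S = σz`, so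
conjugation by `S` exchanges `U_B(t)` and `U_C(t,θ)`. All generators are symmetric matrices,
so transposing the circuit `U(γ,β,θ)` reverses the order of its factors; conjugating the
transpose by `S` therefore yields the circuit `U(β′,γ′,θ)`. Substituting `S Uᵀ S` into `F`,
cyclicity of the trace moves the `S`'s onto `n(θ)` and `σz`, swapping them, and a final
transposition of the whole trace recovers `F(γ,β,θ)`.
-/

theorem List.ofFn_rev {α : Type*} {n : ℕ} (f : Fin n → α) :
    List.ofFn (fun i => f i.rev) = (List.ofFn f).reverse := by
  refine List.ext_getElem (by simp) fun i h₁ _ => ?_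
  simp only [List.getElem_ofFn, List.getElem_reverse, List.length_ofFn]
  congr 1
  ext
  simp only [List.length_ofFn] at h₁
  simp only [Fin.rev]
  omega

theorem mul_list_prod_mul_of_mul_self_eq_one {M : Type*} [Monoid M] {s : M} (hs : s * s = 1)
    (l : List M) : s * l.prod * s = (l.map fun a => s * a * s).prod := by
  induction l with
  | nil => simpa using hs
  | cons a t ih =>
    rw [List.map_cons, List.prod_cons, List.prod_cons, ← ih]
    calc s * (a * t.prod) * s = s * a * (s * s) * t.prod * s := by
          rw [hs, mul_one]; simp only [mul_assoc]
      _ = s * a * s * (s * t.prod * s) := by simp only [mul_assoc]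

theorem mul_mul_eq_of_mul_self_eq_one {M : Type*} [Monoid M] {s a b : M} (hs : s * s = 1)
    (h : s * a * s = b) : s * b * s = a := by
  rw [← h, mul_assoc, mul_assoc, hs, mul_one, ← mul_assoc, hs, one_mul]

theorem Matrix.mul_exp_mul_of_mul_self_eq_one {m : Type*} [Fintype m] [DecidableEq m]
    {S : Matrix m m ℂ} (hS : S * S = 1) (A : Matrix m m ℂ) :
    S * NormedSpace.exp A * S = NormedSpace.exp (S * A * S) :=
  (Matrix.exp_units_conj ⟨S, S, hS, hS⟩ A).symm

theorem Matrix.trace_mul_conj_mul_conj {m R : Type*} [Fintype m] [CommSemiring R]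
    (A B S X Y : Matrix m m R) :
    trace (A * (S * X * S) * B * (S * Y * S)) = trace ((S * A * S) * X * (S * B * S) * Y) := by
  rw [show A * (S * X * S) * B * (S * Y * S) = A * (S * X * S) * B * (S * Y) * S by
    simp only [mul_assoc], trace_mul_comm]
  simp only [mul_assoc]

theorem Matrix.trace_mul_transpose_mul_transpose {m R : Type*} [Fintype m] [CommSemiring R]
    (A B X Y : Matrix m m R) :
    trace (A * Xᵀ * B * Yᵀ) = trace (Bᵀ * X * Aᵀ * Y) := by
  rw [← trace_transpose]
  simp only [transpose_mul, transpose_transpose]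
  rw [← trace_mul_comm Y]
  simp only [mul_assoc]

theorem σz_transpose : σzᵀ = σz := by
  ext i j
  fin_cases i <;> fin_cases j <;> rfl

theorem σx_transpose : σxᵀ = σx := by
  ext i j
  fin_cases i <;> fin_cases j <;> rfl

theorem nvec_eq (θ : ℝ) :
    nvec θ = !![(Real.cos θ : ℂ), (Real.sin θ : ℂ); (Real.sin θ : ℂ), -(Real.cos θ : ℂ)] := by
  ext i j
  fin_cases i <;> fin_cases j <;> simp [nvec, σx, σz]

theorem nvec_transpose (θ : ℝ) : (nvec θ)ᵀ = nvec θ := by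
  simp only [nvec, transpose_add, transpose_smul, σz_transpose, σx_transpose]

theorem nvec_conjTranspose (θ : ℝ) : (nvec θ)ᴴ = nvec θ := by
  rw [nvec_eq]
  ext i j
  fin_cases i <;> fin_cases j <;> simp [-Complex.ofReal_cos, -Complex.ofReal_sin]

theorem nvec_mul_self (θ : ℝ) : nvec θ * nvec θ = 1 := by
  rw [nvec_eq]
  ext i j
  fin_cases i <;> fin_cases j <;>
    simp [Matrix.mul_apply, Fin.sum_univ_two, mul_comm] <;>
    linear_combination Complex.cos_sq_add_sin_sq (θ : ℂ)

theorem nvec_mul_σz_mul_nvec (φ : ℝ) : nvec φ * σz * nvec φ = nvec (2 * φ) := by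
  rw [nvec_eq, nvec_eq (2 * φ), Real.cos_two_mul', Real.sin_two_mul]
  ext i j
  fin_cases i <;> fin_cases j <;> simp [σz, Matrix.mul_apply, Fin.sum_univ_two] <;> ring

theorem nvec_half_mul_σz_mul_nvec_half (θ : ℝ) : nvec (θ / 2) * σz * nvec (θ / 2) = nvec θ := by
  rw [nvec_mul_σz_mul_nvec, mul_div_cancel₀ θ two_ne_zero]

theorem nvec_half_mul_nvec_mul_nvec_half (θ : ℝ) : nvec (θ / 2) * nvec θ * nvec (θ / 2) = σz :=
  mul_mul_eq_of_mul_self_eq_one (nvec_mul_self _) (nvec_half_mul_σz_mul_nvec_half θ)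

theorem UB_transpose (β : ℝ) : (UB β)ᵀ = UB β := by
  rw [UB, ← Matrix.exp_transpose, transpose_smul, σz_transpose]

theorem UC_transpose (γ θ : ℝ) : (UC γ θ)ᵀ = UC γ θ := by
  rw [UC, ← Matrix.exp_transpose, transpose_smul, nvec_transpose]

theorem nvec_half_mul_UB_mul_nvec_half (θ β : ℝ) : nvec (θ / 2) * UB β * nvec (θ / 2) = UC β θ := by
  rw [UB, UC, Matrix.mul_exp_mul_of_mul_self_eq_one (nvec_mul_self _), Matrix.mul_smul,
    Matrix.smul_mul, nvec_half_mul_σz_mul_nvec_half]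

theorem nvec_half_mul_UC_mul_nvec_half (θ γ : ℝ) : nvec (θ / 2) * UC γ θ * nvec (θ / 2) = UB γ := by
  rw [UB, UC, Matrix.mul_exp_mul_of_mul_self_eq_one (nvec_mul_self _), Matrix.mul_smul,
    Matrix.smul_mul, nvec_half_mul_nvec_mul_nvec_half]

theorem Uqaoa_transpose (p : ℕ) (γ β : Fin p → ℝ) (θ : ℝ) :
    (Uqaoa p γ β θ)ᵀ = (List.ofFn fun i => UC (γ i) θ * UB (β i)).prod := by
  simp only [Uqaoa, transpose_list_prod, List.map_reverse, List.reverse_reverse, List.map_ofFn,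
    Function.comp_def, transpose_mul, UB_transpose, UC_transpose]

theorem nvec_half_mul_Uqaoa_transpose_mul_nvec_half (p : ℕ) (γ β : Fin p → ℝ) (θ : ℝ) :
    nvec (θ / 2) * (Uqaoa p γ β θ)ᵀ * nvec (θ / 2) =
      Uqaoa p (fun i => β (Fin.rev i)) (fun i => γ (Fin.rev i)) θ := by
  have hS := nvec_mul_self (θ / 2)
  have hfactor (i : Fin p) : nvec (θ / 2) * (UC (γ i) θ * UB (β i)) * nvec (θ / 2) =
      UB (γ i) * UC (β i) θ := by
    rw [← nvec_half_mul_UC_mul_nvec_half θ, ← nvec_half_mul_UB_mul_nvec_half θ]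
    simp only [mul_assoc, ← mul_assoc (nvec (θ / 2)) (nvec (θ / 2)), hS, one_mul, mul_one]
  rw [Uqaoa_transpose, mul_list_prod_mul_of_mul_self_eq_one hS, List.map_ofFn, Uqaoa,
    List.ofFn_rev (fun i => UB (γ i) * UC (β i) θ), List.reverse_reverse]
  simp only [Function.comp_def, hfactor]

theorem pseudospin_reverse_swap_symmetry_general
    (p : ℕ) (γ β : Fin p → ℝ) (θ : ℝ) :
    Fps p γ β θ = Fps p (fun i => β (Fin.rev i)) (fun i => γ (Fin.rev i)) θ := by
  set S := nvec (θ / 2)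
  set U := Uqaoa p γ β θ
  have hV : (S * Uᵀ * S)ᴴ = S * Uᴴᵀ * S := by
    simp only [conjTranspose_mul, nvec_conjTranspose, S,
      conjTranspose_transpose_eq_transpose_conjTranspose, mul_assoc]
  rw [Fps, Fps, ← nvec_half_mul_Uqaoa_transpose_mul_nvec_half, hV,
    trace_mul_conj_mul_conj, nvec_half_mul_nvec_mul_nvec_half, nvec_half_mul_σz_mul_nvec_half,
    trace_mul_transpose_mul_transpose, σz_transpose, nvec_transpose]

/-- Reversing the angle sequence and exchanging the roles of the γ- and β-angles leaves
the pseudospin expectation unchanged: `F(γ,β,θ) = F(β′,γ′,θ)`. -/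
theorem pseudospin_reverse_swap_symmetry
    (p : ℕ) (hp : 1 ≤ p) (γ β : Fin p → ℝ) (θ : ℝ) :
    Fps p γ β θ = Fps p (fun i => β (Fin.rev i)) (fun i => γ (Fin.rev i)) θ :=
  pseudospin_reverse_swap_symmetry_general p γ β θ
end
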